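/- Assume the Li–Poon–Sze theorem and assume Weaver's result that every operator system 𝒱 ⊆ M_n(ℂ) with dim 𝒱 ≤ 2 has a ⌈n/2⌉-anticlique. Then for every nonnegative integer ℓ, every operator system 𝒱 ⊆ M_n(ℂ) with dim 𝒱 ≤ 2ℓ + 2 has a k-anticlique whenever n > 2 · 3^ℓ (k − 1). -/

import Mathlib

/-!
Compressing by an isometry `J` transports anticliques backwards: if `Q` is a `k`-anticlique of
`Jᴴ 𝒱 J` then `J Q Jᴴ` is a `k`-anticlique of `𝒱`. If `dim 𝒱 ≥ 3`, some `A ∈ 𝒱` has `1, A, Aᴴ`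
linearly independent, and Li–Poon–Sze gives an isometry `J` from dimension `n` down to
`m = 2·3^l(k-1) + 1` with `Jᴴ A J = μ`; then `A - μ` and `Aᴴ - μ̄` are independent elements of the
kernel of the compression, so `dim Jᴴ 𝒱 J ≤ dim 𝒱 - 2` and induction on `l` applies. The base case
compresses to dimension `2k - 1`, where Weaver's result yields a `k`-anticlique.
-/

open Matrix Module Submodule
open scoped ComplexStarModule

section LinearAlgebra

variable {K E F : Type*} [Field K] [AddCommGroup E] [Module K E] [AddCommGroup F] [Module K F]

theorem exists_linearIndependent_triple_of_three_le_finrank_span {x : E} (hx : x ≠ 0)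
    {S : Set E} (hS : 3 ≤ finrank K (span K S)) :
    ∃ y ∈ S, ∃ z ∈ S, LinearIndependent K ![x, y, z] := by
  have hspan (v : Fin 2 → E) : ∃ y ∈ S, y ∉ span K (Set.range v) := by
    by_contra! h
    have := FiniteDimensional.span_of_finite K (Set.finite_range v)
    have := (Submodule.finrank_mono (span_le.mpr h)).trans (finrank_range_le_card v)
    simp only [Fintype.card_fin] at this
    omega
  obtain ⟨y, hyS, hy⟩ := hspan ![x, x]
  obtain ⟨z, hzS, hz⟩ := hspan ![x, y]
  refine ⟨y, hyS, z, hzS, ?_⟩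
  have hxy : LinearIndependent K ![x, y] := by
    refine (LinearIndependent.pair_iff' hx).mpr fun a hay => hy ?_
    rw [← hay]
    exact smul_mem _ a (subset_span ⟨0, rfl⟩)
  simpa using linearIndependent_finSnoc.mpr ⟨hxy, hz⟩

theorem LinearIndependent.sub_smul_pair {x y z : E} (h : LinearIndependent K ![x, y, z])
    (a b : K) : LinearIndependent K ![y - a • x, z - b • x] := by
  rw [LinearIndependent.pair_iff]
  intro s t hst
  have hcoef := Fintype.linearIndependent_iff.mp h ![-(s * a + t * b), s, t] (by
    simp only [Fin.sum_univ_three, cons_val_zero, cons_val_one, cons_val]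
    rw [← hst]
    module)
  exact ⟨hcoef 1, hcoef 2⟩

theorem finrank_map_add_finrank_le {f : E →ₗ[K] F} {V W : Submodule K E}
    [FiniteDimensional K V] (hW : W ≤ V ⊓ LinearMap.ker f) :
    finrank K (V.map f) + finrank K W ≤ finrank K V := by
  have hrn := (f.domRestrict V).finrank_range_add_finrank_ker
  rw [LinearMap.range_domRestrict, LinearMap.ker_domRestrict] at hrn
  have hW' : finrank K W = finrank K (W.comap V.subtype) := by
    rw [← finrank_map_subtype_eq V, map_comap_subtype, inf_eq_right.mpr (hW.trans inf_le_left)]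
  have := Submodule.finrank_mono (comap_mono (f := V.subtype) (hW.trans inf_le_right))
  omega

end LinearAlgebra

theorem LinearIndependent.add_I_smul_sub_I_smul {E : Type*} [AddCommGroup E] [Module ℂ E]
    {x y z : E} (h : LinearIndependent ℂ ![x, y, z]) :
    LinearIndependent ℂ ![x, y + Complex.I • z, y - Complex.I • z] := by
  rw [Fintype.linearIndependent_iff] at h ⊢
  intro g hg
  have hcoef := h ![g 0, g 1 + g 2, Complex.I * (g 1 - g 2)] (by
    simp only [Fin.sum_univ_three, cons_val_zero, cons_val_one, cons_val] at hg ⊢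
    rw [← hg]
    module)
  have hsum : g 1 + g 2 = 0 := hcoef 1
  have hdiff : g 1 - g 2 = 0 := by simpa [Complex.I_ne_zero] using hcoef 2
  have h1 : g 1 = 0 := by linear_combination (hsum + hdiff) / 2
  have h2 : g 2 = 0 := by linear_combination (hsum - hdiff) / 2
  intro i
  fin_cases i
  exacts [hcoef 0, h1, h2]

namespace Matrix

variable {𝕜 : Type*} [Field 𝕜] [StarRing 𝕜] {n m : Type*} [Fintype n]

def compression (J : Matrix n m 𝕜) : Matrix n n 𝕜 →ₗ[𝕜] Matrix m m 𝕜 where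
  toFun X := Jᴴ * X * J
  map_add' X Y := by simp only [Matrix.mul_add, Matrix.add_mul]
  map_smul' c X := by simp only [Matrix.mul_smul, Matrix.smul_mul, RingHom.id_apply]

@[simp]
theorem compression_apply (J : Matrix n m 𝕜) (X : Matrix n n 𝕜) :
    compression J X = Jᴴ * X * J := rfl

theorem compression_one [DecidableEq n] [DecidableEq m] {J : Matrix n m 𝕜} (hJ : Jᴴ * J = 1) :
    compression J 1 = 1 := by
  rw [compression_apply, Matrix.mul_one, hJ]

theorem conjTranspose_compression (J : Matrix n m 𝕜) (X : Matrix n n 𝕜) :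
    (compression J X)ᴴ = compression J Xᴴ := by
  simp only [compression_apply, conjTranspose_mul, conjTranspose_conjTranspose, Matrix.mul_assoc]

theorem conjTranspose_submatrix_one_mul [DecidableEq n] [DecidableEq m] {e : m → n}
    (he : Function.Injective e) :
    ((1 : Matrix n n 𝕜).submatrix id e)ᴴ * (1 : Matrix n n 𝕜).submatrix id e = 1 := by
  rw [conjTranspose_submatrix, conjTranspose_one, ← submatrix_mul _ _ _ _ _ Function.bijective_id,
    Matrix.one_mul, submatrix_one _ he]

theorem rank_mul_mul_conjTranspose [Fintype m] [DecidableEq m] {J : Matrix n m 𝕜}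
    (hJ : Jᴴ * J = 1) (Q : Matrix m m 𝕜) : (J * Q * Jᴴ).rank = Q.rank := by
  refine le_antisymm ((rank_mul_le_left _ _).trans (rank_mul_le_right _ _)) ?_
  calc Q.rank = (Jᴴ * (J * Q * Jᴴ) * J).rank := by
        rw [← Matrix.mul_assoc, ← Matrix.mul_assoc, hJ, Matrix.one_mul, Matrix.mul_assoc, hJ,
          Matrix.mul_one]
    _ ≤ (J * Q * Jᴴ).rank := (rank_mul_le_left _ _).trans (rank_mul_le_right _ _)

end Matrix

namespace Submodule

section Field

variable {𝕜 : Type*} [Field 𝕜] [StarRing 𝕜] {n m : Type*} [Fintype n]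

def IsOperatorSystem [DecidableEq n] (V : Submodule 𝕜 (Matrix n n 𝕜)) : Prop :=
  1 ∈ V ∧ ∀ A ∈ V, Aᴴ ∈ V

def HasAnticlique (V : Submodule 𝕜 (Matrix n n 𝕜)) (k : ℕ) : Prop :=
  ∃ P : Matrix n n 𝕜, Pᴴ = P ∧ P * P = P ∧ P.rank = k ∧
    (fun A => P * A * P) '' (V : Set (Matrix n n 𝕜)) = (span 𝕜 {P} : Submodule 𝕜 (Matrix n n 𝕜))

variable [DecidableEq m] {V : Submodule 𝕜 (Matrix n n 𝕜)} {J : Matrix n m 𝕜}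

theorem IsOperatorSystem.map_compression [DecidableEq n] (hV : V.IsOperatorSystem)
    (hJ : Jᴴ * J = 1) : (V.map (compression J)).IsOperatorSystem := by
  refine ⟨⟨1, hV.1, compression_one hJ⟩, ?_⟩
  rintro _ ⟨A, hA, rfl⟩
  exact ⟨Aᴴ, hV.2 A hA, (conjTranspose_compression J A).symm⟩

theorem HasAnticlique.of_map_compression [Fintype m] (hJ : Jᴴ * J = 1) {k : ℕ}
    (h : (V.map (compression J)).HasAnticlique k) : V.HasAnticlique k := by
  obtain ⟨Q, hQh, hQQ, hQr, hQV⟩ := h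
  refine ⟨J * Q * Jᴴ, ?_, ?_, by rw [rank_mul_mul_conjTranspose hJ, hQr], ?_⟩
  · simp only [conjTranspose_mul, conjTranspose_conjTranspose, hQh, Matrix.mul_assoc]
  · calc J * Q * Jᴴ * (J * Q * Jᴴ) = J * (Q * (Jᴴ * J) * Q) * Jᴴ := by
          simp only [Matrix.mul_assoc]
      _ = J * Q * Jᴴ := by rw [hJ, Matrix.mul_one, hQQ]
  · have hfactor : (fun A => J * Q * Jᴴ * A * (J * Q * Jᴴ)) =
        compression Jᴴ ∘ (fun B => Q * B * Q) ∘ compression J := by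
      ext A : 1
      simp only [Function.comp_apply, compression_apply, conjTranspose_conjTranspose,
        Matrix.mul_assoc]
    rw [hfactor, Set.image_comp, Set.image_comp, ← map_coe, hQV, ← map_coe, map_span,
      Set.image_singleton, compression_apply, conjTranspose_conjTranspose]

end Field

variable {n m : Type*} [DecidableEq n] {V : Submodule ℂ (Matrix n n ℂ)}

theorem IsOperatorSystem.le_span_selfAdjoint (hV : V.IsOperatorSystem) :
    V ≤ span ℂ {B | B ∈ V ∧ IsSelfAdjoint B} := by
  intro A hA
  have hre : (ℜ A : Matrix n n ℂ) ∈ V := by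
    rw [realPart_apply_coe, star_eq_conjTranspose]
    exact smul_of_tower_mem _ _ (add_mem hA (hV.2 A hA))
  have him : (ℑ A : Matrix n n ℂ) ∈ V := by
    rw [imaginaryPart_apply_coe, star_eq_conjTranspose]
    exact smul_mem _ _ (smul_of_tower_mem _ _ (sub_mem hA (hV.2 A hA)))
  rw [← realPart_add_I_smul_imaginaryPart A]
  exact add_mem (subset_span ⟨hre, (ℜ A).2⟩) (smul_mem _ _ (subset_span ⟨him, (ℑ A).2⟩))

theorem IsOperatorSystem.exists_linearIndependent_one_self_conjTranspose [Fintype n]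
    (hV : V.IsOperatorSystem) (h3 : 3 ≤ finrank ℂ V) :
    ∃ A ∈ V, LinearIndependent ℂ ![1, A, Aᴴ] := by
  have : Nonempty n := by
    by_contra h
    rw [not_nonempty_iff] at h
    simp [finrank_zero_of_subsingleton] at h3
  obtain ⟨B, ⟨hBV, hB⟩, C, ⟨hCV, hC⟩, hind⟩ :=
    exists_linearIndependent_triple_of_three_le_finrank_span (one_ne_zero (α := Matrix n n ℂ))
      (h3.trans (finrank_mono hV.le_span_selfAdjoint))
  refine ⟨B + Complex.I • C, add_mem hBV (smul_mem _ _ hCV), ?_⟩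
  have hstar : (B + Complex.I • C)ᴴ = B - Complex.I • C := by
    rw [← star_eq_conjTranspose, star_add, star_smul, hB.star_eq, hC.star_eq, Complex.star_def,
      Complex.conj_I, neg_smul, sub_eq_add_neg]
  rw [hstar]
  exact hind.add_I_smul_sub_I_smul

theorem IsOperatorSystem.exists_isometry_finrank_map_compression_add_two_le [Fintype n]
    [Fintype m] [DecidableEq m] (hV : V.IsOperatorSystem) (h3 : 3 ≤ finrank ℂ V)
    (hscalar : ∀ A : Matrix n n ℂ, ∃ J : Matrix n m ℂ, Jᴴ * J = 1 ∧
      ∃ μ : ℂ, Jᴴ * A * J = μ • (1 : Matrix m m ℂ)) :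
    ∃ J : Matrix n m ℂ, Jᴴ * J = 1 ∧ finrank ℂ (V.map (compression J)) + 2 ≤ finrank ℂ V := by
  obtain ⟨A, hAV, hA⟩ := hV.exists_linearIndependent_one_self_conjTranspose h3
  obtain ⟨J, hJ, μ, hμ⟩ := hscalar A
  have hμA : compression J A = μ • 1 := hμ
  have hμA' : compression J Aᴴ = star μ • 1 := by
    rw [← conjTranspose_compression, hμA, conjTranspose_smul, conjTranspose_one]
  set W := span ℂ (Set.range ![A - μ • 1, Aᴴ - star μ • 1])
  have hW : W ≤ V ⊓ LinearMap.ker (compression J) := by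
    rw [span_le, Set.range_subset_iff, Fin.forall_fin_two]
    refine ⟨⟨sub_mem hAV (smul_mem _ _ hV.1), ?_⟩, ⟨sub_mem (hV.2 A hAV) (smul_mem _ _ hV.1), ?_⟩⟩
    · rw [cons_val_zero, SetLike.mem_coe, LinearMap.mem_ker, map_sub, map_smul, hμA,
        compression_one hJ, sub_self]
    · rw [cons_val_one, cons_val_zero, SetLike.mem_coe, LinearMap.mem_ker, map_sub, map_smul,
        hμA', compression_one hJ, sub_self]
  refine ⟨J, hJ, ?_⟩
  calc finrank ℂ (V.map (compression J)) + 2 = finrank ℂ (V.map (compression J)) + finrank ℂ W := by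
        rw [finrank_span_eq_card (hA.sub_smul_pair μ (star μ)), Fintype.card_fin]
    _ ≤ finrank ℂ V := finrank_map_add_finrank_le hW

theorem IsOperatorSystem.hasAnticlique_of_finrank_le_two
    (hWeaver : ∀ (n : ℕ) (V : Submodule ℂ (Matrix (Fin n) (Fin n) ℂ)),
      V.IsOperatorSystem → finrank ℂ V ≤ 2 → V.HasAnticlique ((n + 1) / 2))
    {n k : ℕ} (hnk : 2 * (k - 1) < n) {V : Submodule ℂ (Matrix (Fin n) (Fin n) ℂ)}
    (hV : V.IsOperatorSystem) (h2 : finrank ℂ V ≤ 2) : V.HasAnticlique k := by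
  have hm : 2 * k - 1 ≤ n := by omega
  have hJ := conjTranspose_submatrix_one_mul (𝕜 := ℂ) (Fin.castLE_injective hm)
  refine HasAnticlique.of_map_compression hJ ?_
  have hk : (2 * k - 1 + 1) / 2 = k := by omega
  simpa only [hk] using hWeaver _ _ (hV.map_compression hJ) ((finrank_map_le _ _).trans h2)

theorem IsOperatorSystem.hasAnticlique_of_finrank_le
    (hLPS : ∀ (n k : ℕ), 3 * k ≤ n + 2 → ∀ A : Matrix (Fin n) (Fin n) ℂ,
      ∃ J : Matrix (Fin n) (Fin k) ℂ, Jᴴ * J = 1 ∧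
        ∃ μ : ℂ, Jᴴ * A * J = μ • (1 : Matrix (Fin k) (Fin k) ℂ))
    (hWeaver : ∀ (n : ℕ) (V : Submodule ℂ (Matrix (Fin n) (Fin n) ℂ)),
      V.IsOperatorSystem → finrank ℂ V ≤ 2 → V.HasAnticlique ((n + 1) / 2))
    (l : ℕ) {n k : ℕ} (hnk : 2 * 3 ^ l * (k - 1) < n)
    {V : Submodule ℂ (Matrix (Fin n) (Fin n) ℂ)} (hV : V.IsOperatorSystem)
    (hdim : finrank ℂ V ≤ 2 * l + 2) : V.HasAnticlique k := by
  induction l generalizing n V with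
  | zero => exact hV.hasAnticlique_of_finrank_le_two hWeaver (by simpa using hnk) hdim
  | succ l ih =>
    have hpow : 2 * 3 ^ (l + 1) * (k - 1) = 3 * (2 * 3 ^ l * (k - 1)) := by ring
    rcases le_or_gt (finrank ℂ V) (2 * l + 2) with hle | hlt
    · exact ih (by omega) hV hle
    · obtain ⟨J, hJ, hdrop⟩ := hV.exists_isometry_finrank_map_compression_add_two_le (by omega)
        (hLPS n (2 * 3 ^ l * (k - 1) + 1) (by omega))
      have hdimJ : finrank ℂ (V.map (compression J)) ≤ 2 * l + 2 := by omega
      exact .of_map_compression hJ (ih (Nat.lt_succ_self _) (hV.map_compression hJ) hdimJ)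

end Submodule

open Matrix in
theorem stmt_13
    (LPS : ∀ (n k : ℕ), 3 * k ≤ n + 2 → ∀ A : Matrix (Fin n) (Fin n) ℂ,
      ∃ J : Matrix (Fin n) (Fin k) ℂ, Jᴴ * J = 1 ∧
        ∃ mu : ℂ, Jᴴ * A * J = mu • (1 : Matrix (Fin k) (Fin k) ℂ))
    (Weaver : ∀ (n : ℕ) (V : Submodule ℂ (Matrix (Fin n) (Fin n) ℂ)),
      (1 : Matrix (Fin n) (Fin n) ℂ) ∈ V → (∀ A ∈ V, Aᴴ ∈ V) →
      Module.finrank ℂ V ≤ 2 →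
      ∃ P : Matrix (Fin n) (Fin n) ℂ, Pᴴ = P ∧ P * P = P ∧ P.rank = (n + 1) / 2 ∧
        (fun A => P * A * P) '' (V : Set (Matrix (Fin n) (Fin n) ℂ)) =
          (Submodule.span ℂ {P} : Submodule ℂ (Matrix (Fin n) (Fin n) ℂ))) :
    ∀ (l n k : ℕ), 2 * 3 ^ l * (k - 1) < n →
    ∀ V : Submodule ℂ (Matrix (Fin n) (Fin n) ℂ),
      (1 : Matrix (Fin n) (Fin n) ℂ) ∈ V → (∀ A ∈ V, Aᴴ ∈ V) →
      Module.finrank ℂ V ≤ 2 * l + 2 →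
      ∃ P : Matrix (Fin n) (Fin n) ℂ, Pᴴ = P ∧ P * P = P ∧ P.rank = k ∧
        (fun A => P * A * P) '' (V : Set (Matrix (Fin n) (Fin n) ℂ)) =
          (Submodule.span ℂ {P} : Submodule ℂ (Matrix (Fin n) (Fin n) ℂ)) :=
  fun l _ _ hnk _ h1 hstar hdim =>
    IsOperatorSystem.hasAnticlique_of_finrank_le LPS (fun n V hV => Weaver n V hV.1 hV.2) l hnk
      ⟨h1, hstar⟩ hdim
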